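/- arXiv:1707.00123 — 6 statements merged into one kernel-verified Lean document; each statement's English description precedes it below -/
import Mathlib

section
/- Let M ≥ 1 and a_1, …, a_M > 0, b_1, …, b_M > 0. Let λ* > 0 be the unique positive solution of Σ_{j=1}^{M} b_j / u⁻¹(λ/a_j) = 1, and set m*_j = b_j / u⁻¹(λ*/a_j) for each j. Then Σ_{j=1}^{M} m*_j = 1 and m* = (m*_1, …, m*_M) is the unique global minimizer of Σ_{j=1}^{M} a_j·m_j·(e^{b_j/m_j} − 1) over the set { m ∈ ℝ^M : m_j > 0 for all j and Σ_{j=1}^{M} m_j ≤ 1 }. In particular, every optimal time allocation for single-cell sum power minimization uses the full time resource Σ_j m_j = 1. -/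
lemma key_id (a b lam t s : ℝ) (ha : 0 < a) (ht : 0 < t) (hs : 0 < s)
    (hu : (b/s) * Real.exp (b/s) - Real.exp (b/s) + 1 = lam / a) :
    a * s * (Real.exp (b/s) - 1) - lam * (t - s) +
      a * t * Real.exp (b/s) * (Real.exp (b/t - b/s) - 1 - (b/t - b/s))
      = a * t * (Real.exp (b/t) - 1) := by
  have he : Real.exp (b/t - b/s) = Real.exp (b/t) / Real.exp (b/s) := Real.exp_sub _ _
  have hlam : lam = a * ((b/s) * Real.exp (b/s) - Real.exp (b/s) + 1) := by
    rw [hu]; field_simp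
  rw [he, hlam]
  have h1 : Real.exp (b/s) ≠ 0 := (Real.exp_pos _).ne'
  field_simp
  ring

lemma key_le (a b lam t s : ℝ) (ha : 0 < a) (ht : 0 < t) (hs : 0 < s)
    (hu : (b/s) * Real.exp (b/s) - Real.exp (b/s) + 1 = lam / a) :
    a * s * (Real.exp (b/s) - 1) - lam * (t - s) ≤ a * t * (Real.exp (b/t) - 1) := by
  have hid := key_id a b lam t s ha ht hs hu
  have h1 : (0:ℝ) < a * t * Real.exp (b/s) := by positivity
  have h2 : (0:ℝ) ≤ Real.exp (b/t - b/s) - 1 - (b/t - b/s) := by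
    have := Real.add_one_le_exp (b/t - b/s); linarith
  nlinarith

lemma key_lt (a b lam t s : ℝ) (ha : 0 < a) (hb : 0 < b) (ht : 0 < t) (hs : 0 < s)
    (hts : t ≠ s)
    (hu : (b/s) * Real.exp (b/s) - Real.exp (b/s) + 1 = lam / a) :
    a * s * (Real.exp (b/s) - 1) - lam * (t - s) < a * t * (Real.exp (b/t) - 1) := by
  have hid := key_id a b lam t s ha ht hs hu
  have h1 : (0:ℝ) < a * t * Real.exp (b/s) := by positivity
  have hd : b/t - b/s ≠ 0 := by
    intro h
    apply hts
    have : b/t = b/s := by linarith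
    rw [div_eq_div_iff ht.ne' hs.ne'] at this
    have := mul_left_cancel₀ hb.ne' this
    linarith
  have h2 : (0:ℝ) < Real.exp (b/t - b/s) - 1 - (b/t - b/s) := by
    have := Real.add_one_lt_exp hd; linarith
  nlinarith

/-- With `a_j, b_j > 0`, `λ* > 0` the unique positive solution of
`Σ_j b_j / u⁻¹(λ/a_j) = 1` (where `u⁻¹` inverts `u(x) = x·eˣ − eˣ + 1` on `[0, ∞)`),
and `m*_j = b_j / u⁻¹(λ*/a_j)`, we have `Σ_j m*_j = 1`, `m* > 0`, and `m*` is the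
unique global minimizer of the total power `Σ_j a_j·m_j·(e^{b_j/m_j} − 1)` over
`{ m : m_j > 0 ∀j, Σ_j m_j ≤ 1 }`. In particular, every optimal time allocation uses
the full time resource. -/
theorem stmt_3 (M : ℕ) (hM : 1 ≤ M) (a b : Fin M → ℝ)
    (ha : ∀ j, 0 < a j) (hb : ∀ j, 0 < b j)
    (uinv : ℝ → ℝ)
    (huinv_left : ∀ x : ℝ, 0 ≤ x → uinv (x * Real.exp x - Real.exp x + 1) = x)
    (huinv_right : ∀ y : ℝ, 0 ≤ y →
      0 ≤ uinv y ∧ uinv y * Real.exp (uinv y) - Real.exp (uinv y) + 1 = y)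
    (lam : ℝ) (hlam : 0 < lam)
    (heq : ∑ j, b j / uinv (lam / a j) = 1)
    (mstar : Fin M → ℝ) (hmstar : ∀ j, mstar j = b j / uinv (lam / a j)) :
    (∑ j, mstar j = 1) ∧
    (∀ j, 0 < mstar j) ∧
    (∀ m : Fin M → ℝ, (∀ j, 0 < m j) → (∑ j, m j ≤ 1) →
      ∑ j, a j * mstar j * (Real.exp (b j / mstar j) - 1)
        ≤ ∑ j, a j * m j * (Real.exp (b j / m j) - 1)) ∧
    (∀ m : Fin M → ℝ, (∀ j, 0 < m j) → (∑ j, m j ≤ 1) → m ≠ mstar →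
      ∑ j, a j * mstar j * (Real.exp (b j / mstar j) - 1)
        < ∑ j, a j * m j * (Real.exp (b j / m j) - 1)) := by
  -- positivity of uinv (lam / a j)
  have hx : ∀ j, 0 < uinv (lam / a j) := by
    intro j
    have hpos : 0 < lam / a j := div_pos hlam (ha j)
    obtain ⟨h0, hval⟩ := huinv_right _ hpos.le
    rcases h0.lt_or_eq with h | h
    · exact h
    · exfalso
      rw [← h] at hval
      simp [Real.exp_zero] at hval
      linarith
  have hms : ∀ j, 0 < mstar j := fun j => by
    rw [hmstar j]; exact div_pos (hb j) (hx j)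
  have hsum1 : ∑ j, mstar j = 1 := by
    rw [← heq]; exact Finset.sum_congr rfl fun j _ => hmstar j
  -- b j / mstar j = uinv (lam / a j)
  have hbm : ∀ j, b j / mstar j = uinv (lam / a j) := by
    intro j
    rw [hmstar j]
    rw [div_div_eq_mul_div, mul_comm, mul_div_assoc, div_self (hb j).ne', mul_one]
  have hu : ∀ j, (b j / mstar j) * Real.exp (b j / mstar j)
      - Real.exp (b j / mstar j) + 1 = lam / a j := by
    intro j
    rw [hbm j]
    exact (huinv_right _ (div_pos hlam (ha j)).le).2
  refine ⟨hsum1, hms, ?_, ?_⟩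
  · intro m hm hle
    have h1 : ∑ j, (a j * mstar j * (Real.exp (b j / mstar j) - 1)
        - lam * (m j - mstar j)) ≤ ∑ j, a j * m j * (Real.exp (b j / m j) - 1) :=
      Finset.sum_le_sum fun j _ =>
        key_le (a j) (b j) lam (m j) (mstar j) (ha j) (hm j) (hms j) (hu j)
    have h2 : ∑ j, (a j * mstar j * (Real.exp (b j / mstar j) - 1)
        - lam * (m j - mstar j))
        = ∑ j, a j * mstar j * (Real.exp (b j / mstar j) - 1)
          - lam * ((∑ j, m j) - 1) := by
      rw [Finset.sum_sub_distrib, ← Finset.mul_sum, Finset.sum_sub_distrib, hsum1]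
    rw [h2] at h1
    nlinarith [mul_nonneg hlam.le (sub_nonneg.mpr hle)]
  · intro m hm hle hne
    obtain ⟨j0, hj0⟩ := Function.ne_iff.mp hne
    have h1 : ∑ j, (a j * mstar j * (Real.exp (b j / mstar j) - 1)
        - lam * (m j - mstar j)) < ∑ j, a j * m j * (Real.exp (b j / m j) - 1) := by
      refine Finset.sum_lt_sum (fun j _ =>
        key_le (a j) (b j) lam (m j) (mstar j) (ha j) (hm j) (hms j) (hu j))
        ⟨j0, Finset.mem_univ j0, ?_⟩
      exact key_lt (a j0) (b j0) lam (m j0) (mstar j0) (ha j0) (hb j0) (hm j0)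
        (hms j0) hj0 (hu j0)
    have h2 : ∑ j, (a j * mstar j * (Real.exp (b j / mstar j) - 1)
        - lam * (m j - mstar j))
        = ∑ j, a j * mstar j * (Real.exp (b j / mstar j) - 1)
          - lam * ((∑ j, m j) - 1) := by
      rw [Finset.sum_sub_distrib, ← Finset.mul_sum, Finset.sum_sub_distrib, hsum1]
    rw [h2] at h1
    nlinarith [mul_nonneg hlam.le (sub_nonneg.mpr hle)]
end

section
/- Let M ≥ 1, B > 0, σ² > 0, g_j > 0, D_j > 0 for j = 1, …, M, and P_max > 0. Consider maximizing Σ_{j=1}^{M} B·m_j·log₂(1 + g_j·p̄_j/(σ²·m_j)) over (m, p̄) with m_j > 0, p̄_j ≥ 0, subject to B·m_j·log₂(1 + g_j·p̄_j/(σ²·m_j)) ≥ D_j for all j, Σ_{j=1}^{M} m_j ≤ 1, and Σ_{j=1}^{M} p̄_j ≤ P_max. If this problem is feasible, then every global maximizer (m*, p̄*) satisfies Σ_{j=1}^{M} m*_j = 1 and Σ_{j=1}^{M} p̄*_j = P_max; i.e., to maximize the sum rate it is optimal to use full time resources and full transmit power. -/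
lemma slope_lemma (t1 t2 : ℝ) (h1 : 0 < t1) (h12 : t1 < t2) :
    t1 * Real.log (1 + t2) < t2 * Real.log (1 + t1) := by
  have h2 : 0 < t2 := h1.trans h12
  have key := strictConcaveOn_log_Ioi.2
    (Set.mem_Ioi.mpr one_pos) (Set.mem_Ioi.mpr (show (0:ℝ) < 1 + t2 by linarith))
    (by intro h; linarith)
    (show (0:ℝ) < 1 - t1/t2 by
      have : t1/t2 < 1 := (div_lt_one h2).mpr h12
      linarith)
    (show (0:ℝ) < t1/t2 by positivity) (by ring)
  simp only [smul_eq_mul, Real.log_one, mul_one, mul_zero, add_zero, zero_add] at key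
  have harg : 1 - t1/t2 + t1/t2 * (1 + t2) = 1 + t1 := by
    field_simp; ring
  rw [harg] at key
  -- key : (1 - t1/t2)*0 + t1/t2 * log (1+t2) < log (1+t1)  (after simp)
  have key' : t1 / t2 * Real.log (1 + t2) < Real.log (1 + t1) := by linarith
  have := mul_lt_mul_of_pos_left key' h2
  calc t1 * Real.log (1 + t2) = t2 * (t1 / t2 * Real.log (1 + t2)) := by
        field_simp
    _ < t2 * Real.log (1 + t1) := this

lemma mono_m (c m1 m2 : ℝ) (hc : 0 < c) (h1 : 0 < m1) (h12 : m1 < m2) :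
    m1 * Real.log (1 + c / m1) < m2 * Real.log (1 + c / m2) := by
  have h2 : 0 < m2 := h1.trans h12
  have ht : c / m2 < c / m1 := by
    apply div_lt_div_of_pos_left hc h1 h12
  have hpos : 0 < c / m2 := by positivity
  have key := slope_lemma (c / m2) (c / m1) hpos ht
  -- key : c/m2 * log (1 + c/m1) < c/m1 * log (1 + c/m2)
  have hscale : 0 < m1 * m2 / c := by positivity
  have := mul_lt_mul_of_pos_left key hscale
  calc m1 * Real.log (1 + c / m1)
      = m1 * m2 / c * (c / m2 * Real.log (1 + c / m1)) := by
        field_simp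
    _ < m1 * m2 / c * (c / m1 * Real.log (1 + c / m2)) := this
    _ = m2 * Real.log (1 + c / m2) := by field_simp

lemma key_m (B σ2 gp m1 m2 : ℝ) (hB : 0 < B) (hσ : 0 < σ2) (hgp : 0 < gp)
    (h1 : 0 < m1) (h12 : m1 < m2) :
    B * m1 * Real.logb 2 (1 + gp / (σ2 * m1)) <
      B * m2 * Real.logb 2 (1 + gp / (σ2 * m2)) := by
  have hc : 0 < gp / σ2 := by positivity
  have e1 : gp / (σ2 * m1) = (gp / σ2) / m1 := by field_simp
  have e2 : gp / (σ2 * m2) = (gp / σ2) / m2 := by field_simp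
  rw [e1, e2]
  have hmono := mono_m (gp / σ2) m1 m2 hc h1 h12
  have hlog2 : 0 < Real.log 2 := Real.log_pos (by norm_num)
  unfold Real.logb
  calc B * m1 * (Real.log (1 + gp / σ2 / m1) / Real.log 2)
      = (B / Real.log 2) * (m1 * Real.log (1 + gp / σ2 / m1)) := by ring
    _ < (B / Real.log 2) * (m2 * Real.log (1 + gp / σ2 / m2)) := by
        apply mul_lt_mul_of_pos_left hmono (by positivity)
    _ = B * m2 * (Real.log (1 + gp / σ2 / m2) / Real.log 2) := by ring

lemma key_p (B σ2 gc m p1 p2 : ℝ) (hB : 0 < B) (hσ : 0 < σ2) (hgc : 0 < gc)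
    (hm : 0 < m) (hp1 : 0 ≤ p1) (h12 : p1 < p2) :
    B * m * Real.logb 2 (1 + gc * p1 / (σ2 * m)) <
      B * m * Real.logb 2 (1 + gc * p2 / (σ2 * m)) := by
  have h1 : 0 < 1 + gc * p1 / (σ2 * m) := by positivity
  have h2 : 1 + gc * p1 / (σ2 * m) < 1 + gc * p2 / (σ2 * m) := by
    have hd : gc * p1 / (σ2 * m) < gc * p2 / (σ2 * m) := by gcongr
    linarith
  exact mul_lt_mul_of_pos_left (Real.logb_lt_logb one_lt_two h1 h2) (by positivity)

/-- Single-cell sum rate maximization: every global maximizer `(m*, p̄*)` of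
`Σ_j B·m_j·log₂(1 + g_j·p̄_j/(σ²·m_j))` subject to the minimal rate demands,
`Σ_j m_j ≤ 1` and `Σ_j p̄_j ≤ P_max` uses full time resources (`Σ_j m*_j = 1`)
and full transmit power (`Σ_j p̄*_j = P_max`). -/
theorem stmt_5 (M : ℕ) (hM : 1 ≤ M) (B σ2 Pmax : ℝ)
    (hB : 0 < B) (hσ : 0 < σ2) (hPmax : 0 < Pmax)
    (g D : Fin M → ℝ) (hg : ∀ j, 0 < g j) (hD : ∀ j, 0 < D j)
    (mstar pstar : Fin M → ℝ)
    (hm : ∀ j, 0 < mstar j) (hp : ∀ j, 0 ≤ pstar j)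
    (hrate : ∀ j, D j ≤ B * mstar j * Real.logb 2 (1 + g j * pstar j / (σ2 * mstar j)))
    (hmsum : ∑ j, mstar j ≤ 1) (hpsum : ∑ j, pstar j ≤ Pmax)
    (hopt : ∀ m p : Fin M → ℝ,
      (∀ j, 0 < m j) → (∀ j, 0 ≤ p j) →
      (∀ j, D j ≤ B * m j * Real.logb 2 (1 + g j * p j / (σ2 * m j))) →
      (∑ j, m j ≤ 1) → (∑ j, p j ≤ Pmax) →
      ∑ j, B * m j * Real.logb 2 (1 + g j * p j / (σ2 * m j)) ≤
        ∑ j, B * mstar j * Real.logb 2 (1 + g j * pstar j / (σ2 * mstar j))) :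
    (∑ j, mstar j = 1) ∧ (∑ j, pstar j = Pmax) := by
  have hppos : ∀ j, 0 < pstar j := by
    intro j
    rcases (hp j).lt_or_eq with h | h
    · exact h
    · exfalso
      have h0 := hrate j
      rw [← h] at h0
      simp only [mul_zero, zero_div, add_zero, Real.logb_one] at h0
      linarith [hD j]
  have j0 : Fin M := ⟨0, hM⟩
  constructor
  · -- full time resources
    by_contra hne
    have hlt : ∑ j, mstar j < 1 := lt_of_le_of_ne hmsum hne
    set s := 1 - ∑ j, mstar j with hs
    have hs0 : 0 < s := by simp only [hs]; linarith
    set m' := Function.update mstar j0 (mstar j0 + s) with hm'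
    have hm'j0 : m' j0 = mstar j0 + s := by rw [hm', Function.update_self]
    have hm'ne : ∀ j, j ≠ j0 → m' j = mstar j := by
      intro j hj; rw [hm', Function.update_of_ne hj]
    have hm'pos : ∀ j, 0 < m' j := by
      intro j
      by_cases hj : j = j0
      · subst hj; rw [hm'j0]; linarith [hm j]
      · rw [hm'ne j hj]; exact hm j
    have hsum' : ∑ j, m' j = 1 := by
      rw [hm', Finset.sum_update_of_mem (Finset.mem_univ j0)]
      have h2 := Finset.add_sum_erase Finset.univ mstar (Finset.mem_univ j0)
      rw [Finset.sdiff_singleton_eq_erase]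
      linarith
    have hkey : B * mstar j0 * Real.logb 2 (1 + g j0 * pstar j0 / (σ2 * mstar j0)) <
        B * m' j0 * Real.logb 2 (1 + g j0 * pstar j0 / (σ2 * m' j0)) := by
      rw [hm'j0]
      exact key_m B σ2 (g j0 * pstar j0) (mstar j0) (mstar j0 + s) hB hσ
        (mul_pos (hg j0) (hppos j0)) (hm j0) (by linarith [hm j0])
    have hrate' : ∀ j, D j ≤ B * m' j * Real.logb 2 (1 + g j * pstar j / (σ2 * m' j)) := by
      intro j
      by_cases hj : j = j0
      · subst hj; exact (hrate j).trans hkey.le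
      · rw [hm'ne j hj]; exact hrate j
    have hobj := hopt m' pstar hm'pos hp hrate' hsum'.le hpsum
    have hstrict : ∑ j, B * mstar j * Real.logb 2 (1 + g j * pstar j / (σ2 * mstar j)) <
        ∑ j, B * m' j * Real.logb 2 (1 + g j * pstar j / (σ2 * m' j)) := by
      apply Finset.sum_lt_sum
      · intro j _
        by_cases hj : j = j0
        · subst hj; exact hkey.le
        · rw [hm'ne j hj]
      · exact ⟨j0, Finset.mem_univ _, hkey⟩
    linarith
  · -- full power
    by_contra hne
    have hlt : ∑ j, pstar j < Pmax := lt_of_le_of_ne hpsum hne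
    set s := Pmax - ∑ j, pstar j with hs
    have hs0 : 0 < s := by simp only [hs]; linarith
    set p' := Function.update pstar j0 (pstar j0 + s) with hp'
    have hp'j0 : p' j0 = pstar j0 + s := by rw [hp', Function.update_self]
    have hp'ne : ∀ j, j ≠ j0 → p' j = pstar j := by
      intro j hj; rw [hp', Function.update_of_ne hj]
    have hp'pos : ∀ j, 0 ≤ p' j := by
      intro j
      by_cases hj : j = j0
      · subst hj; rw [hp'j0]; linarith [hp j]
      · rw [hp'ne j hj]; exact hp j
    have hsum' : ∑ j, p' j = Pmax := by
      rw [hp', Finset.sum_update_of_mem (Finset.mem_univ j0)]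
      have h2 := Finset.add_sum_erase Finset.univ pstar (Finset.mem_univ j0)
      rw [Finset.sdiff_singleton_eq_erase]
      linarith
    have hkey : B * mstar j0 * Real.logb 2 (1 + g j0 * pstar j0 / (σ2 * mstar j0)) <
        B * mstar j0 * Real.logb 2 (1 + g j0 * p' j0 / (σ2 * mstar j0)) := by
      rw [hp'j0]
      exact key_p B σ2 (g j0) (mstar j0) (pstar j0) (pstar j0 + s) hB hσ
        (hg j0) (hm j0) (hp j0) (by linarith [hp j0])
    have hrate' : ∀ j, D j ≤ B * mstar j * Real.logb 2 (1 + g j * p' j / (σ2 * mstar j)) := by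
      intro j
      by_cases hj : j = j0
      · subst hj; exact (hrate j).trans hkey.le
      · rw [hp'ne j hj]; exact hrate j
    have hobj := hopt mstar p' hm hp'pos hrate' hmsum hsum'.le
    have hstrict : ∑ j, B * mstar j * Real.logb 2 (1 + g j * pstar j / (σ2 * mstar j)) <
        ∑ j, B * mstar j * Real.logb 2 (1 + g j * p' j / (σ2 * mstar j)) := by
      apply Finset.sum_lt_sum
      · intro j _
        by_cases hj : j = j0
        · subst hj; exact hkey.le
        · rw [hp'ne j hj]
      · exact ⟨j0, Finset.mem_univ _, hkey⟩
    linarith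
end

section
/- Under the setting of the single-cell sum rate maximization problem, assume additionally that user 1 has the strictly largest channel gain, i.e., g_1 > g_j for all j ≥ 2. Then at every global maximizer (m*, p̄*), the rate constraint is tight for every other user: B·m*_j·log₂(1 + g_j·p̄*_j/(σ²·m*_j)) = D_j for all j = 2, …, M. That is, the optimal power allocation gives every user except the one with the best channel exactly its minimal required rate, and all additional power goes to the best-channel user. -/
/-- Sum over `Fin M` of a function that differs from `f` only at two distinct
indices `i` and `k`. -/
lemma aux_sum {M : ℕ} (f h : Fin M → ℝ) (i k : Fin M) (hik : i ≠ k)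
    (heq : ∀ j, j ≠ i → j ≠ k → h j = f j) :
    ∑ j, h j = ∑ j, f j + (h i - f i) + (h k - f k) := by
  have hki : k ∈ Finset.univ.erase i := by simp [hik.symm]
  have split : ∀ (u : Fin M → ℝ), ∑ j, u j
      = u i + (u k + ∑ j ∈ (Finset.univ.erase i).erase k, u j) := by
    intro u
    rw [Finset.add_sum_erase _ u hki, Finset.add_sum_erase _ u (Finset.mem_univ i)]
  rw [split h, split f]
  have : ∑ j ∈ (Finset.univ.erase i).erase k, h j
      = ∑ j ∈ (Finset.univ.erase i).erase k, f j := by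
    refine Finset.sum_congr rfl ?_
    intro x hx
    simp only [Finset.mem_erase] at hx
    exact heq x hx.2.1 hx.1
  rw [this]; ring

/-- Superadditivity of the rate function `(m, p) ↦ m · log₂(1 + g·p/(σ²·m))`,
a consequence of concavity of `log`. -/
lemma aux_superadd (σ2 gg m1 m2 p1 p2 : ℝ) (hσ : 0 < σ2) (hg : 0 < gg)
    (hm1 : 0 < m1) (hm2 : 0 < m2) (hp1 : 0 ≤ p1) (hp2 : 0 ≤ p2) :
    m1 * Real.logb 2 (1 + gg * p1 / (σ2 * m1)) + m2 * Real.logb 2 (1 + gg * p2 / (σ2 * m2))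
      ≤ (m1 + m2) * Real.logb 2 (1 + gg * (p1 + p2) / (σ2 * (m1 + m2))) := by
  have hL2 : 0 < Real.log 2 := Real.log_pos (by norm_num)
  set x1 : ℝ := 1 + gg * p1 / (σ2 * m1) with hx1def
  set x2 : ℝ := 1 + gg * p2 / (σ2 * m2) with hx2def
  have hx1 : 0 < x1 := by positivity
  have hx2 : 0 < x2 := by positivity
  have hmm : 0 < m1 + m2 := by positivity
  have ha : (0:ℝ) ≤ m1 / (m1 + m2) := by positivity
  have hb : (0:ℝ) ≤ m2 / (m1 + m2) := by positivity
  have hab : m1 / (m1 + m2) + m2 / (m1 + m2) = 1 := by field_simp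
  have hcc := strictConcaveOn_log_Ioi.concaveOn
  have key := hcc.2 (Set.mem_Ioi.2 hx1) (Set.mem_Ioi.2 hx2) ha hb hab
  have hcomb : (m1 / (m1 + m2)) • x1 + (m2 / (m1 + m2)) • x2
      = 1 + gg * (p1 + p2) / (σ2 * (m1 + m2)) := by
    simp only [smul_eq_mul, hx1def, hx2def]
    field_simp
    ring
  rw [hcomb] at key
  simp only [smul_eq_mul] at key
  have key2 : m1 * Real.log x1 + m2 * Real.log x2
      ≤ (m1 + m2) * Real.log (1 + gg * (p1 + p2) / (σ2 * (m1 + m2))) := by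
    have h3 := mul_le_mul_of_nonneg_left key hmm.le
    have e : (m1 + m2) * (m1 / (m1 + m2) * Real.log x1 + m2 / (m1 + m2) * Real.log x2)
        = m1 * Real.log x1 + m2 * Real.log x2 := by field_simp
    rw [e] at h3
    exact h3
  simp only [Real.logb]
  calc m1 * (Real.log x1 / Real.log 2) + m2 * (Real.log x2 / Real.log 2)
      = (m1 * Real.log x1 + m2 * Real.log x2) / Real.log 2 := by ring
    _ ≤ ((m1 + m2) * Real.log (1 + gg * (p1 + p2) / (σ2 * (m1 + m2)))) / Real.log 2 :=
        div_le_div_of_nonneg_right key2 hL2.le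
    _ = (m1 + m2) * (Real.log (1 + gg * (p1 + p2) / (σ2 * (m1 + m2))) / Real.log 2) := by ring

/-- Homogeneity of the SNR term. -/
lemma aux_hom (σ2 gg m p t : ℝ) (hσ : σ2 ≠ 0) (hm : m ≠ 0) (ht : t ≠ 0) :
    gg * (t * p) / (σ2 * (t * m)) = gg * p / (σ2 * m) := by
  field_simp

/-- Single-cell sum rate maximization with user `1` (index `0`) having the strictly
largest channel gain: at every global maximizer `(m*, p̄*)`, the rate constraint is
tight for every other user, i.e. `B·m*_j·log₂(1 + g_j·p̄*_j/(σ²·m*_j)) = D_j` for all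
`j ≠ 1`; all additional power goes to the best-channel user. -/
theorem stmt_6 (M : ℕ) (hM : 1 ≤ M) (B σ2 Pmax : ℝ)
    (hB : 0 < B) (hσ : 0 < σ2) (hPmax : 0 < Pmax)
    (g D : Fin M → ℝ) (hg : ∀ j, 0 < g j) (hD : ∀ j, 0 < D j)
    (hbest : ∀ j : Fin M, j ≠ ⟨0, hM⟩ → g j < g ⟨0, hM⟩)
    (mstar pstar : Fin M → ℝ)
    (hm : ∀ j, 0 < mstar j) (hp : ∀ j, 0 ≤ pstar j)
    (hrate : ∀ j, D j ≤ B * mstar j * Real.logb 2 (1 + g j * pstar j / (σ2 * mstar j)))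
    (hmsum : ∑ j, mstar j ≤ 1) (hpsum : ∑ j, pstar j ≤ Pmax)
    (hopt : ∀ m p : Fin M → ℝ,
      (∀ j, 0 < m j) → (∀ j, 0 ≤ p j) →
      (∀ j, D j ≤ B * m j * Real.logb 2 (1 + g j * p j / (σ2 * m j))) →
      (∑ j, m j ≤ 1) → (∑ j, p j ≤ Pmax) →
      ∑ j, B * m j * Real.logb 2 (1 + g j * p j / (σ2 * m j)) ≤
        ∑ j, B * mstar j * Real.logb 2 (1 + g j * pstar j / (σ2 * mstar j))) :
    ∀ j : Fin M, j ≠ ⟨0, hM⟩ →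
      B * mstar j * Real.logb 2 (1 + g j * pstar j / (σ2 * mstar j)) = D j := by
  intro k hk
  by_contra hne
  have hm0' := hm (⟨0, hM⟩ : Fin M)
  have hp0' := hp (⟨0, hM⟩ : Fin M)
  have hmk' := hm k
  have hpk' := hp k
  have hg0' := hg (⟨0, hM⟩ : Fin M)
  have hgk' := hg k
  set i0 : Fin M := ⟨0, hM⟩ with hi0
  set R : Fin M → ℝ := fun j => B * mstar j * Real.logb 2 (1 + g j * pstar j / (σ2 * mstar j))
    with hRdef
  have hRk_gt : D k < R k := lt_of_le_of_ne (hrate k) (Ne.symm hne)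
  have hRk_pos : 0 < R k := (hD k).trans hRk_gt
  set t : ℝ := D k / R k with htdef
  have ht0 : 0 < t := div_pos (hD k) hRk_pos
  have ht1 : t < 1 := (div_lt_one hRk_pos).2 hRk_gt
  have htR : t * R k = D k := div_mul_cancel₀ (D k) hRk_pos.ne'
  set c : ℝ := 1 - t with hcdef
  have hc : 0 < c := by simp only [hcdef]; linarith
  -- pstar k > 0
  have hpk : 0 < pstar k := by
    rcases lt_or_eq_of_le (hp k) with h | h
    · exact h
    · exfalso
      have : R k = 0 := by simp [hRdef, ← h]
      linarith
  -- the modified allocation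
  set m' : Fin M → ℝ := fun j =>
    if j = i0 then mstar i0 + c * mstar k else if j = k then t * mstar k else mstar j with hm'def
  set p' : Fin M → ℝ := fun j =>
    if j = i0 then pstar i0 + c * pstar k else if j = k then t * pstar k else pstar j with hp'def
  have hki0 : i0 ≠ k := Ne.symm hk
  have hm'i0 : m' i0 = mstar i0 + c * mstar k := by simp [hm'def]
  have hm'k : m' k = t * mstar k := by simp [hm'def, hk]
  have hp'i0 : p' i0 = pstar i0 + c * pstar k := by simp [hp'def]
  have hp'k : p' k = t * pstar k := by simp [hp'def, hk]
  have hm'other : ∀ j, j ≠ i0 → j ≠ k → m' j = mstar j := by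
    intro j h1 h2; simp [hm'def, h1, h2]
  have hp'other : ∀ j, j ≠ i0 → j ≠ k → p' j = pstar j := by
    intro j h1 h2; simp [hp'def, h1, h2]
  -- positivity
  have hm'pos : ∀ j, 0 < m' j := by
    intro j
    by_cases h1 : j = i0
    · subst h1; rw [hm'i0]; positivity
    · by_cases h2 : j = k
      · subst h2; rw [hm'k]; positivity
      · rw [hm'other j h1 h2]; exact hm j
  have hp'nonneg : ∀ j, 0 ≤ p' j := by
    intro j
    by_cases h1 : j = i0
    · subst h1; rw [hp'i0]; positivity
    · by_cases h2 : j = k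
      · subst h2; rw [hp'k]; positivity
      · rw [hp'other j h1 h2]; exact hp j
  -- sums
  have hm'sum : ∑ j, m' j ≤ 1 := by
    rw [aux_sum mstar m' i0 k hki0 hm'other, hm'i0, hm'k]
    have : mstar i0 + c * mstar k - mstar i0 + (t * mstar k - mstar k) = 0 := by
      simp only [hcdef]; ring
    linarith
  have hp'sum : ∑ j, p' j ≤ Pmax := by
    rw [aux_sum pstar p' i0 k hki0 hp'other, hp'i0, hp'k]
    have : pstar i0 + c * pstar k - pstar i0 + (t * pstar k - pstar k) = 0 := by
      simp only [hcdef]; ring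
    linarith
  -- rate of user k in the new allocation
  have hRk' : B * m' k * Real.logb 2 (1 + g k * p' k / (σ2 * m' k)) = D k := by
    rw [hm'k, hp'k, aux_hom σ2 (g k) (mstar k) (pstar k) t hσ.ne' (hm k).ne' ht0.ne']
    have hRkeq : R k = B * mstar k * Real.logb 2 (1 + g k * pstar k / (σ2 * mstar k)) := rfl
    rw [← htR, hRkeq]; ring
  -- rate of user i0 strictly increases by more than c * R k
  have hRi0' : R i0 + c * R k
      < B * m' i0 * Real.logb 2 (1 + g i0 * p' i0 / (σ2 * m' i0)) := by
    have hsup := aux_superadd σ2 (g i0) (mstar i0) (c * mstar k) (pstar i0) (c * pstar k)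
      hσ (hg i0) (hm i0) (by positivity) (hp i0) (by positivity)
    have hhom : g i0 * (c * pstar k) / (σ2 * (c * mstar k))
        = g i0 * pstar k / (σ2 * mstar k) :=
      aux_hom σ2 (g i0) (mstar k) (pstar k) c hσ.ne' (hm k).ne' hc.ne'
    rw [hhom] at hsup
    have hlt : Real.logb 2 (1 + g k * pstar k / (σ2 * mstar k))
        < Real.logb 2 (1 + g i0 * pstar k / (σ2 * mstar k)) := by
      apply Real.logb_lt_logb (by norm_num)
      · positivity
      · have hnum : g k * pstar k / (σ2 * mstar k) < g i0 * pstar k / (σ2 * mstar k) := by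
          gcongr
          exact hbest k hk
        linarith
    have hBmul := mul_le_mul_of_nonneg_left hsup hB.le
    rw [hm'i0, hp'i0]
    have e1 : B * (mstar i0 * Real.logb 2 (1 + g i0 * pstar i0 / (σ2 * mstar i0))
        + c * mstar k * Real.logb 2 (1 + g i0 * pstar k / (σ2 * mstar k)))
        = R i0 + c * (B * mstar k * Real.logb 2 (1 + g i0 * pstar k / (σ2 * mstar k))) := by
      have hRi0eq : R i0
          = B * mstar i0 * Real.logb 2 (1 + g i0 * pstar i0 / (σ2 * mstar i0)) := rfl
      rw [hRi0eq]; ring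
    have e2 : c * R k
        = c * (B * mstar k * Real.logb 2 (1 + g k * pstar k / (σ2 * mstar k))) := rfl
    have hstrict : c * (B * mstar k * Real.logb 2 (1 + g k * pstar k / (σ2 * mstar k)))
        < c * (B * mstar k * Real.logb 2 (1 + g i0 * pstar k / (σ2 * mstar k))) := by
      apply mul_lt_mul_of_pos_left _ hc
      apply mul_lt_mul_of_pos_left hlt (by positivity)
    calc R i0 + c * R k
        < R i0 + c * (B * mstar k * Real.logb 2 (1 + g i0 * pstar k / (σ2 * mstar k))) := by
          rw [e2]; linarith
      _ = B * (mstar i0 * Real.logb 2 (1 + g i0 * pstar i0 / (σ2 * mstar i0))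
            + c * mstar k * Real.logb 2 (1 + g i0 * pstar k / (σ2 * mstar k))) := e1.symm
      _ ≤ B * ((mstar i0 + c * mstar k) * Real.logb 2
            (1 + g i0 * (pstar i0 + c * pstar k) / (σ2 * (mstar i0 + c * mstar k)))) := hBmul
      _ = B * (mstar i0 + c * mstar k) * Real.logb 2
            (1 + g i0 * (pstar i0 + c * pstar k) / (σ2 * (mstar i0 + c * mstar k))) := by ring
  -- feasibility of rates
  have hcRk : 0 < c * R k := by positivity
  have hrate' : ∀ j, D j ≤ B * m' j * Real.logb 2 (1 + g j * p' j / (σ2 * m' j)) := by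
    intro j
    by_cases h1 : j = i0
    · subst h1
      have hR0 : R i0
          = B * mstar i0 * Real.logb 2 (1 + g i0 * pstar i0 / (σ2 * mstar i0)) := rfl
      have h4 := hrate i0
      linarith [hRi0', hcRk]
    · by_cases h2 : j = k
      · subst h2; rw [hRk']
      · rw [hm'other j h1 h2, hp'other j h1 h2]; exact hrate j
  -- apply optimality and derive contradiction
  have hle := hopt m' p' hm'pos hp'nonneg hrate' hm'sum hp'sum
  set F : Fin M → ℝ := fun j => B * m' j * Real.logb 2 (1 + g j * p' j / (σ2 * m' j)) with hFdef
  have hFother : ∀ j, j ≠ i0 → j ≠ k → F j = R j := by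
    intro j h1 h2
    simp only [hFdef, hRdef, hm'other j h1 h2, hp'other j h1 h2]
  have hsumF : ∑ j, F j = ∑ j, R j + (F i0 - R i0) + (F k - R k) :=
    aux_sum R F i0 k hki0 hFother
  have hFk : F k = D k := hRk'
  have hFi0 : R i0 + c * R k < F i0 := hRi0'
  have hsum_lt : ∑ j, R j < ∑ j, F j := by
    rw [hsumF, hFk]
    have : c * R k + (D k - R k) = 0 := by
      rw [hcdef, ← htR]; ring
    linarith
  have : ∑ j, F j ≤ ∑ j, R j := hle
  linarith
end

section
/- Consider a multi-cell network with base stations i ∈ {1, …, N}, disjoint user sets J_i, channel gains g_{ij} > 0, noise power σ² > 0, bandwidth B > 0, rate demands D_{ij} > 0 and power limits P_i^max > 0. Define f_{ij}(m, p) = B·m_{ij}·log₂(1 + p_{ij}·g_{ij}/(Σ_{k≠i} Σ_{l∈J_k} m_{kl}·p_{kl}·g_{kj} + σ²)). Consider minimizing the total power Σ_{i} Σ_{j∈J_i} m_{ij}·p_{ij} over m, p ≥ 0 subject to f_{ij}(m, p) ≥ D_{ij} for all i, j, Σ_{j∈J_i} m_{ij}·p_{ij} ≤ P_i^max and Σ_{j∈J_i}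 m_{ij} ≤ 1 for all i. If this problem is feasible, then every optimal solution (m*, p*) satisfies f_{ij}(m*, p*) = D_{ij} for all i and j ∈ J_i (all rate constraints are tight) and Σ_{j∈J_i} m*_{ij} = 1 for all i (every cell operates at full load). -/
/-!
At an optimum every rate constraint is tight: if user `(i, j)` had slack, lowering its power
alone would keep its own rate at least `D i j` (its interference comes from other cells only)
and could only raise everybody else's rate, while strictly reducing the total power.
Every cell is at full load: the rate `t * log (1 + a / t)` is strictly increasing in the time
fraction `t` at fixed average power `t * p`, so stretching a cell below full load to full load
while keeping each `m i j * p i j` fixed leaves the interference pattern and the objective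
unchanged but makes the rate constraints of that cell slack, contradicting tightness.
-/

open Finset

/-- Achievable rate `f_{ij}(m, p)` of user `j` in cell `i` under the load-coupled
interference model: the interference from cell `k ≠ i` onto user `(i,j)` is the
time-averaged quantity `Σ_{l∈J_k} m_{kl}·p_{kl}·g_{k,(i,j)}`. Here `g k i j` is the
channel gain from base station `k` to user `j` of cell `i`. -/
noncomputable def loadCoupledRate (N : ℕ) (K : Fin N → ℕ) (B σ2 : ℝ)
    (g : Fin N → (i : Fin N) → Fin (K i) → ℝ)
    (m p : (i : Fin N) → Fin (K i) → ℝ) (i : Fin N) (j : Fin (K i)) : ℝ :=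
  B * m i j * Real.logb 2 (1 + p i j * g i i j /
    ((∑ k ∈ Finset.univ.erase i, ∑ l, m k l * p k l * g k i j) + σ2))

/-- Feasibility for the multi-cell sum power minimization problem: nonnegative time
fractions and powers, rate demands met, per-cell average power limits and per-cell
time budgets respected. -/
noncomputable def loadCoupledFeasible (N : ℕ) (K : Fin N → ℕ) (B σ2 : ℝ)
    (g : Fin N → (i : Fin N) → Fin (K i) → ℝ)
    (D : (i : Fin N) → Fin (K i) → ℝ) (Pmax : Fin N → ℝ)
    (m p : (i : Fin N) → Fin (K i) → ℝ) : Prop :=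
  (∀ i j, 0 ≤ m i j) ∧ (∀ i j, 0 ≤ p i j) ∧
  (∀ i j, D i j ≤ loadCoupledRate N K B σ2 g m p i j) ∧
  (∀ i, ∑ j, m i j * p i j ≤ Pmax i) ∧
  (∀ i, ∑ j, m i j ≤ 1)

open Real Set

theorem strictMonoOn_mul_logb_one_add_div {b a : ℝ} (hb : 1 < b) (ha : 0 < a) :
    StrictMonoOn (fun t => t * logb b (1 + a / t)) (Ioi 0) := by
  intro x hx y hy hxy
  simp only [Set.mem_Ioi] at hx hy
  have hxy' : 0 < 1 - x / y := by rw [sub_pos, div_lt_one hy]; exact hxy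
  -- `1 + a / y` is a proper convex combination of `1 + a / x` and `1`
  have hconc := strictConcaveOn_log_Ioi.2 (x := 1 + a / x) (y := 1)
    (by simp only [Set.mem_Ioi]; positivity) (by simp) (by simp only [ne_eq, add_eq_left]; positivity)
    (div_pos hx hy) hxy' (by ring)
  have hcomb : (x / y) • (1 + a / x) + (1 - x / y) • (1 : ℝ) = 1 + a / y := by
    simp only [smul_eq_mul]; field_simp; ring
  rw [hcomb] at hconc
  simp only [smul_eq_mul, log_one, mul_zero, add_zero] at hconc
  have hlogb : 0 < log b := log_pos hb
  simp only [logb, ← mul_div_assoc]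
  rw [div_lt_div_iff_of_pos_right hlogb]
  calc x * log (1 + a / x) = y * (x / y * log (1 + a / x)) := by field_simp
    _ < y * log (1 + a / y) := by gcongr

theorem exists_lt_mul_logb_one_add_mul_eq {b a c x d : ℝ} (hb : 1 < b) (ha : 0 < a) (hc : 0 < c)
    (hx : 0 ≤ x) (hd : 0 < d) (hlt : d < a * logb b (1 + x * c)) :
    ∃ y, 0 < y ∧ y < x ∧ a * logb b (1 + y * c) = d := by
  have hd_lt : d / a < logb b (1 + x * c) := by rwa [div_lt_iff₀' ha]
  rw [lt_logb_iff_rpow_lt hb (by positivity)] at hd_lt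
  have hpow : 1 < b ^ (d / a) := one_lt_rpow hb (by positivity)
  refine ⟨(b ^ (d / a) - 1) / c, div_pos (by linarith) hc, ?_, ?_⟩
  · rw [div_lt_iff₀ hc]; linarith
  · rw [div_mul_cancel₀ _ hc.ne', add_sub_cancel, logb_rpow (by linarith) (by linarith)]
    field_simp

/-- Interference-plus-noise at user `j` of cell `i`, as a function of the average transmit
powers `x k l = m k l * p k l`. -/
noncomputable def loadCoupledInterference {N : ℕ} {K : Fin N → ℕ} (σ2 : ℝ)
    (g : Fin N → (i : Fin N) → Fin (K i) → ℝ)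
    (x : (i : Fin N) → Fin (K i) → ℝ) (i : Fin N) (j : Fin (K i)) : ℝ :=
  (∑ k ∈ univ.erase i, ∑ l, x k l * g k i j) + σ2

section
variable {N : ℕ} {K : Fin N → ℕ} {B σ2 : ℝ} {g : Fin N → (i : Fin N) → Fin (K i) → ℝ}
  {D : (i : Fin N) → Fin (K i) → ℝ} {Pmax : Fin N → ℝ}
  {m p m' p' x y : (i : Fin N) → Fin (K i) → ℝ}

theorem loadCoupledRate_eq (i : Fin N) (j : Fin (K i)) :
    loadCoupledRate N K B σ2 g m p i j = B * m i j * logb 2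
      (1 + p i j * g i i j / loadCoupledInterference σ2 g (fun k l => m k l * p k l) i j) :=
  rfl

theorem loadCoupledInterference_pos (hσ : 0 < σ2) (hg : ∀ k i j, 0 ≤ g k i j)
    (hx : ∀ k l, 0 ≤ x k l) (i : Fin N) (j : Fin (K i)) :
    0 < loadCoupledInterference σ2 g x i j :=
  add_pos_of_nonneg_of_pos
    (sum_nonneg fun k _ => sum_nonneg fun l _ => mul_nonneg (hx k l) (hg k i j)) hσ

theorem loadCoupledInterference_mono (hg : ∀ k i j, 0 ≤ g k i j) (hxy : ∀ k l, x k l ≤ y k l)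
    (i : Fin N) (j : Fin (K i)) :
    loadCoupledInterference σ2 g x i j ≤ loadCoupledInterference σ2 g y i j := by
  unfold loadCoupledInterference
  gcongr with k _ l _
  exacts [hg k i j, hxy k l]

theorem pos_of_loadCoupledRate_pos {i : Fin N} {j : Fin (K i)} (hm : 0 ≤ m i j) (hp : 0 ≤ p i j)
    (h : 0 < loadCoupledRate N K B σ2 g m p i j) : 0 < m i j ∧ 0 < p i j := by
  refine ⟨hm.lt_of_ne ?_, hp.lt_of_ne ?_⟩ <;>
  · rintro hzero
    simp [loadCoupledRate, ← hzero] at h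

theorem pos_of_loadCoupledFeasible (hD : ∀ i j, 0 < D i j)
    (hf : loadCoupledFeasible N K B σ2 g D Pmax m p) (i : Fin N) (j : Fin (K i)) :
    0 < m i j ∧ 0 < p i j :=
  pos_of_loadCoupledRate_pos (hf.1 i j) (hf.2.1 i j) ((hD i j).trans_le (hf.2.2.1 i j))

theorem mul_logb_le_loadCoupledRate (hB : 0 ≤ B) (hσ : 0 < σ2) (hg : ∀ k i j, 0 ≤ g k i j)
    (hm' : ∀ k l, 0 ≤ m' k l) (hp' : ∀ k l, 0 ≤ p' k l)
    (hle : ∀ k l, m' k l * p' k l ≤ m k l * p k l) (i : Fin N) (j : Fin (K i)) :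
    B * m' i j * logb 2
        (1 + p' i j * g i i j / loadCoupledInterference σ2 g (fun k l => m k l * p k l) i j) ≤
      loadCoupledRate N K B σ2 g m' p' i j := by
  have hI_le := loadCoupledInterference_mono (σ2 := σ2) hg hle i j
  have hI' := loadCoupledInterference_pos hσ hg (fun k l => mul_nonneg (hm' k l) (hp' k l)) i j
  have hsignal : 0 ≤ p' i j * g i i j := mul_nonneg (hp' i j) (hg i i j)
  have hI := hI'.trans_le hI_le
  rw [loadCoupledRate_eq]
  gcongr
  · exact mul_nonneg hB (hm' i j)
  · norm_num

theorem exists_loadCoupledFeasible_sum_lt_of_lt_loadCoupledRate (hB : 0 < B) (hσ : 0 < σ2)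
    (hg : ∀ k i j, 0 < g k i j) (hD : ∀ i j, 0 < D i j)
    (hf : loadCoupledFeasible N K B σ2 g D Pmax m p) {i₀ : Fin N} {j₀ : Fin (K i₀)}
    (hslack : D i₀ j₀ < loadCoupledRate N K B σ2 g m p i₀ j₀) :
    ∃ p', loadCoupledFeasible N K B σ2 g D Pmax m p' ∧
      ∑ i, ∑ j, m i j * p' i j < ∑ i, ∑ j, m i j * p i j := by
  obtain ⟨hm, hp, hrate, hpow, htime⟩ := hf
  obtain ⟨hm₀, -⟩ := pos_of_loadCoupledRate_pos (hm i₀ j₀) (hp i₀ j₀) ((hD i₀ j₀).trans hslack)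
  have hg' : ∀ k i j, 0 ≤ g k i j := fun k i j => (hg k i j).le
  have hI := loadCoupledInterference_pos hσ hg' (fun k l => mul_nonneg (hm k l) (hp k l)) i₀ j₀
  -- lower the power of the slack user until its rate constraint becomes tight
  obtain ⟨q, hq, hqp, hqD⟩ := exists_lt_mul_logb_one_add_mul_eq one_lt_two (mul_pos hB hm₀)
    (div_pos (hg i₀ i₀ j₀) hI) (hp i₀ j₀) (hD i₀ j₀)
    (by simpa only [loadCoupledRate_eq, mul_div_assoc] using hslack)
  let p' : (i : Fin N) → Fin (K i) → ℝ := fun i j =>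
    if (⟨i, j⟩ : (i : Fin N) × Fin (K i)) = ⟨i₀, j₀⟩ then q else p i j
  have hp'_le : ∀ i j, p' i j ≤ p i j := by
    intro i j
    by_cases h : (⟨i, j⟩ : (i : Fin N) × Fin (K i)) = ⟨i₀, j₀⟩
    · cases h; simpa [p'] using hqp.le
    · simp [p', h]
  have hp'_nonneg : ∀ i j, 0 ≤ p' i j := by
    intro i j
    by_cases h : (⟨i, j⟩ : (i : Fin N) × Fin (K i)) = ⟨i₀, j₀⟩
    · cases h; simpa [p'] using hq.le
    · simpa [p', h] using hp i j
  have hpow_le : ∀ i j, m i j * p' i j ≤ m i j * p i j := fun i j =>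
    mul_le_mul_of_nonneg_left (hp'_le i j) (hm i j)
  have hrate' : ∀ i j, D i j ≤ loadCoupledRate N K B σ2 g m p' i j := by
    intro i j
    refine le_trans ?_ (mul_logb_le_loadCoupledRate hB.le hσ hg' hm hp'_nonneg hpow_le i j)
    by_cases h : (⟨i, j⟩ : (i : Fin N) × Fin (K i)) = ⟨i₀, j₀⟩
    · cases h; simp [p', ← hqD, mul_div_assoc]
    · simp only [p', h, if_false]
      exact hrate i j
  refine ⟨p', ⟨hm, hp'_nonneg, hrate', fun i => (sum_le_sum fun j _ => hpow_le i j).trans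
    (hpow i), htime⟩, ?_⟩
  refine sum_lt_sum (fun i _ => sum_le_sum fun j _ => hpow_le i j) ⟨i₀, mem_univ _, ?_⟩
  refine sum_lt_sum (fun j _ => hpow_le i₀ j) ⟨j₀, mem_univ _, ?_⟩
  simpa [p'] using mul_lt_mul_of_pos_left hqp hm₀

theorem loadCoupledRate_eq_of_mul_eq (hx : ∀ k l, m' k l * p' k l = m k l * p k l)
    {i : Fin N} {j : Fin (K i)} (hm' : m' i j ≠ 0) :
    loadCoupledRate N K B σ2 g m' p' i j = B * (m' i j * logb 2 (1 +
      m i j * p i j * g i i j / loadCoupledInterference σ2 g (fun k l => m k l * p k l) i j /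
        m' i j)) := by
  have hx' : (fun k l => m' k l * p' k l) = fun k l => m k l * p k l :=
    funext fun k => funext fun l => hx k l
  rw [loadCoupledRate_eq, hx', ← hx i j]
  field_simp

theorem loadCoupledRate_lt_of_mul_eq (hB : 0 < B) (hσ : 0 < σ2) (hg : ∀ k i j, 0 < g k i j)
    (hm : ∀ k l, 0 ≤ m k l) (hp : ∀ k l, 0 ≤ p k l) (hx : ∀ k l, m' k l * p' k l = m k l * p k l)
    {i : Fin N} {j : Fin (K i)} (hmij : 0 < m i j) (hpij : 0 < p i j) (hlt : m i j < m' i j) :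
    loadCoupledRate N K B σ2 g m p i j < loadCoupledRate N K B σ2 g m' p' i j := by
  have hI := loadCoupledInterference_pos hσ (fun k i j => (hg k i j).le)
    (fun k l => mul_nonneg (hm k l) (hp k l)) i j
  rw [loadCoupledRate_eq_of_mul_eq (fun _ _ => rfl) hmij.ne',
    loadCoupledRate_eq_of_mul_eq hx (hmij.trans hlt).ne']
  have ha : 0 < m i j * p i j * g i i j / loadCoupledInterference σ2 g
      (fun k l => m k l * p k l) i j := by
    have := hg i i j
    positivity
  exact mul_lt_mul_of_pos_left
    (strictMonoOn_mul_logb_one_add_div one_lt_two ha hmij (hmij.trans hlt) hlt) hB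

theorem loadCoupledRate_le_of_mul_eq (hB : 0 < B) (hσ : 0 < σ2) (hg : ∀ k i j, 0 < g k i j)
    (hm : ∀ k l, 0 ≤ m k l) (hp : ∀ k l, 0 ≤ p k l) (hx : ∀ k l, m' k l * p' k l = m k l * p k l)
    {i : Fin N} {j : Fin (K i)} (hmij : 0 < m i j) (hpij : 0 < p i j) (hle : m i j ≤ m' i j) :
    loadCoupledRate N K B σ2 g m p i j ≤ loadCoupledRate N K B σ2 g m' p' i j := by
  rcases hle.lt_or_eq with hlt | heq
  · exact (loadCoupledRate_lt_of_mul_eq hB hσ hg hm hp hx hmij hpij hlt).le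
  · rw [loadCoupledRate_eq_of_mul_eq (fun _ _ => rfl) hmij.ne',
      loadCoupledRate_eq_of_mul_eq hx (heq ▸ hmij).ne', heq]

theorem loadCoupledRate_eq_of_optimal (hB : 0 < B) (hσ : 0 < σ2)
    (hg : ∀ k i j, 0 < g k i j) (hD : ∀ i j, 0 < D i j)
    (hf : loadCoupledFeasible N K B σ2 g D Pmax m p)
    (hopt : ∀ m' p', loadCoupledFeasible N K B σ2 g D Pmax m' p' →
      ∑ i, ∑ j, m i j * p i j ≤ ∑ i, ∑ j, m' i j * p' i j)
    (i : Fin N) (j : Fin (K i)) :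
    loadCoupledRate N K B σ2 g m p i j = D i j := by
  refine le_antisymm (not_lt.mp fun hslack => ?_) (hf.2.2.1 i j)
  obtain ⟨p', hf', hlt⟩ :=
    exists_loadCoupledFeasible_sum_lt_of_lt_loadCoupledRate hB hσ hg hD hf hslack
  exact (hopt m p' hf').not_gt hlt

theorem exists_loadCoupledFeasible_lt_loadCoupledRate_of_sum_lt (hB : 0 < B) (hσ : 0 < σ2)
    (hg : ∀ k i j, 0 < g k i j) (hD : ∀ i j, 0 < D i j)
    (hf : loadCoupledFeasible N K B σ2 g D Pmax m p) {i₀ : Fin N} (j₀ : Fin (K i₀))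
    (hload : ∑ j, m i₀ j < 1) :
    ∃ m' p', loadCoupledFeasible N K B σ2 g D Pmax m' p' ∧
      ∑ i, ∑ j, m' i j * p' i j = ∑ i, ∑ j, m i j * p i j ∧
      D i₀ j₀ < loadCoupledRate N K B σ2 g m' p' i₀ j₀ := by
  obtain ⟨hm, hp, hrate, hpow, htime⟩ := hf
  have hpos := pos_of_loadCoupledFeasible hD ⟨hm, hp, hrate, hpow, htime⟩
  set S : Fin N → ℝ := fun i => ∑ j, m i j
  have hS : ∀ i (j : Fin (K i)), 0 < S i := fun i j =>
    (hpos i j).1.trans_le (single_le_sum (fun l _ => hm i l) (mem_univ j))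
  -- stretch every cell to full load, keeping each user's average power `m * p`
  set m' : (i : Fin N) → Fin (K i) → ℝ := fun i j => m i j / S i
  set p' : (i : Fin N) → Fin (K i) → ℝ := fun i j => p i j * S i
  have hx : ∀ i j, m' i j * p' i j = m i j * p i j := fun i j => by
    have := (hS i j).ne'
    simp only [m', p']
    field_simp
  have hm_le : ∀ i j, m i j ≤ m' i j := fun i j =>
    le_div_self (hm i j) (hS i j) (htime i)
  refine ⟨m', p', ⟨fun i j => div_nonneg (hm i j) (hS i j).le,
    fun i j => mul_nonneg (hp i j) (hS i j).le, fun i j => (hrate i j).trans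
    (loadCoupledRate_le_of_mul_eq hB hσ hg hm hp hx (hpos i j).1 (hpos i j).2 (hm_le i j)),
    fun i => by simpa only [hx] using hpow i,
    fun i => by simpa only [m', ← sum_div] using div_self_le_one (S i)⟩,
    by simp only [hx], ?_⟩
  refine (hrate i₀ j₀).trans_lt
    (loadCoupledRate_lt_of_mul_eq hB hσ hg hm hp hx (hpos i₀ j₀).1 (hpos i₀ j₀).2 ?_)
  exact (lt_div_iff₀ (hS i₀ j₀)).2 (mul_lt_of_lt_one_right (hpos i₀ j₀).1 hload)

end

theorem stmt_10_general (N : ℕ) (K : Fin N → ℕ) (hK : ∀ i, 1 ≤ K i)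
    (B σ2 : ℝ) (hB : 0 < B) (hσ : 0 < σ2)
    (g : Fin N → (i : Fin N) → Fin (K i) → ℝ) (hg : ∀ k i j, 0 < g k i j)
    (D : (i : Fin N) → Fin (K i) → ℝ) (hD : ∀ i j, 0 < D i j)
    (Pmax : Fin N → ℝ)
    (mstar pstar : (i : Fin N) → Fin (K i) → ℝ)
    (hfeas : loadCoupledFeasible N K B σ2 g D Pmax mstar pstar)
    (hopt : ∀ m p : (i : Fin N) → Fin (K i) → ℝ,
      loadCoupledFeasible N K B σ2 g D Pmax m p →
      ∑ i, ∑ j, mstar i j * pstar i j ≤ ∑ i, ∑ j, m i j * p i j) :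
    (∀ i j, loadCoupledRate N K B σ2 g mstar pstar i j = D i j) ∧
    (∀ i, ∑ j, mstar i j = 1) := by
  refine ⟨loadCoupledRate_eq_of_optimal hB hσ hg hD hfeas hopt, fun i => ?_⟩
  refine le_antisymm (hfeas.2.2.2.2 i) (not_lt.mp fun hload => ?_)
  obtain ⟨m', p', hf', hsum, hslack⟩ :=
    exists_loadCoupledFeasible_lt_loadCoupledRate_of_sum_lt hB hσ hg hD hfeas ⟨0, hK i⟩ hload
  have hopt' : ∀ m p, loadCoupledFeasible N K B σ2 g D Pmax m p →
      ∑ i, ∑ j, m' i j * p' i j ≤ ∑ i, ∑ j, m i j * p i j := by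
    simpa only [hsum] using hopt
  exact hslack.ne' (loadCoupledRate_eq_of_optimal hB hσ hg hD hf' hopt' i ⟨0, hK i⟩)

/-- Multi-cell sum power minimization with load coupling: if the problem is feasible,
then every optimal solution `(m*, p*)` has all rate constraints tight
(`f_{ij}(m*, p*) = D_{ij}` for all `i, j`) and every cell at full load
(`Σ_{j∈J_i} m*_{ij} = 1` for all `i`). -/
theorem stmt_10 (N : ℕ) (hN : 1 ≤ N) (K : Fin N → ℕ) (hK : ∀ i, 1 ≤ K i)
    (B σ2 : ℝ) (hB : 0 < B) (hσ : 0 < σ2)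
    (g : Fin N → (i : Fin N) → Fin (K i) → ℝ) (hg : ∀ k i j, 0 < g k i j)
    (D : (i : Fin N) → Fin (K i) → ℝ) (hD : ∀ i j, 0 < D i j)
    (Pmax : Fin N → ℝ) (hPmax : ∀ i, 0 < Pmax i)
    (mstar pstar : (i : Fin N) → Fin (K i) → ℝ)
    (hfeas : loadCoupledFeasible N K B σ2 g D Pmax mstar pstar)
    (hopt : ∀ m p : (i : Fin N) → Fin (K i) → ℝ,
      loadCoupledFeasible N K B σ2 g D Pmax m p →
      ∑ i, ∑ j, mstar i j * pstar i j ≤ ∑ i, ∑ j, m i j * p i j) :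
    (∀ i j, loadCoupledRate N K B σ2 g mstar pstar i j = D i j) ∧
    (∀ i, ∑ j, mstar i j = 1) :=
  stmt_10_general N K hK B σ2 hB hσ g hg D hD Pmax mstar pstar hfeas hopt
end

section
/- Let I : ℝ^N_{≥0} → ℝ^N satisfy positivity (I(q) > 0 componentwise for all q ≥ 0), monotonicity (q⁽¹⁾ ≥ q⁽²⁾ ≥ 0 implies I(q⁽¹⁾) ≥ I(q⁽²⁾)), and scalability (for all α > 1 and q ≥ 0, α·I(q) > I(α·q) componentwise). Then I has at most one fixed point in ℝ^N_{≥0}: if q ≥ 0, q' ≥ 0, I(q) = q and I(q') = q', then q = q'. -/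
lemma aux_le (N : ℕ) (hN : 1 ≤ N) (I : (Fin N → ℝ) → (Fin N → ℝ))
    (hpos : ∀ q : Fin N → ℝ, (∀ i, 0 ≤ q i) → ∀ i, 0 < I q i)
    (hmono : ∀ q1 q2 : Fin N → ℝ, (∀ i, 0 ≤ q2 i) → (∀ i, q2 i ≤ q1 i) →
      ∀ i, I q2 i ≤ I q1 i)
    (hscale : ∀ (α : ℝ), 1 < α → ∀ q : Fin N → ℝ, (∀ i, 0 ≤ q i) →
      ∀ i, I (fun k => α * q k) i < α * I q i)
    (q q' : Fin N → ℝ) (hq : ∀ i, 0 ≤ q i) (hq' : ∀ i, 0 ≤ q' i)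
    (hfix : I q = q) (hfix' : I q' = q') :
    ∀ i, q i ≤ q' i := by
  have hq'pos : ∀ i, 0 < q' i := by
    intro i; rw [← hfix']; exact hpos q' hq' i
  haveI : Nonempty (Fin N) := ⟨⟨0, hN⟩⟩
  set α : ℝ := ⨆ i, q i / q' i with hα
  have hfin : ∀ i, q i / q' i ≤ α := fun i =>
    le_ciSup (f := fun i => q i / q' i) (Set.Finite.bddAbove (Set.finite_range _)) i
  have hub : ∀ i, q i ≤ α * q' i := by
    intro i
    have := hfin i
    rw [div_le_iff₀ (hq'pos i)] at this
    linarith [this]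
  by_cases hα1 : α ≤ 1
  · intro i
    calc q i ≤ α * q' i := hub i
      _ ≤ 1 * q' i := by nlinarith [hq'pos i]
      _ = q' i := one_mul _
  · push_neg at hα1
    exfalso
    obtain ⟨j, hj⟩ := Finite.exists_max (fun i => q i / q' i)
    have hαj : α = q j / q' j := le_antisymm (ciSup_le hj) (hfin j)
    have hqj : q j = α * q' j := by
      rw [hαj, div_mul_cancel₀ _ (hq'pos j).ne']
    have h1 : q j ≤ I (fun k => α * q' k) j := by
      rw [← hfix]
      exact hmono _ q hq (fun i => hub i) j
    have h2 : I (fun k => α * q' k) j < α * I q' j := hscale α hα1 q' hq' j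
    rw [hfix'] at h2
    rw [← hqj] at h2
    linarith
/-- A standard interference function (positive, monotone and scalable on nonnegative
vectors) has at most one fixed point in the nonnegative orthant. -/
theorem stmt_16 (N : ℕ) (hN : 1 ≤ N) (I : (Fin N → ℝ) → (Fin N → ℝ))
    (hpos : ∀ q : Fin N → ℝ, (∀ i, 0 ≤ q i) → ∀ i, 0 < I q i)
    (hmono : ∀ q1 q2 : Fin N → ℝ, (∀ i, 0 ≤ q2 i) → (∀ i, q2 i ≤ q1 i) →
      ∀ i, I q2 i ≤ I q1 i)
    (hscale : ∀ (α : ℝ), 1 < α → ∀ q : Fin N → ℝ, (∀ i, 0 ≤ q i) →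
      ∀ i, I (fun k => α * q k) i < α * I q i)
    (q q' : Fin N → ℝ) (hq : ∀ i, 0 ≤ q i) (hq' : ∀ i, 0 ≤ q' i)
    (hfix : I q = q) (hfix' : I q' = q') :
    q = q' := by
  funext i
  exact le_antisymm
    (aux_le N hN I hpos hmono hscale q q' hq hq' hfix hfix' i)
    (aux_le N hN I hpos hmono hscale q' q hq' hq hfix' hfix i)
end

section
/- Consider the multi-cell sum rate maximization problem: maximize Σ_i Σ_{j∈J_i} r_{ij} over m, p ≥ 0 with r_{ij} = f_{ij}(m, p) = B·m_{ij}·log₂(1 + p_{ij}·g_{ij}/(Σ_{k≠i} Σ_{l∈J_k} m_{kl}·p_{kl}·g_{kj} + σ²)), subject to r_{ij} ≥ D_{ij}, Σ_{j∈J_i} m_{ij}·p_{ij} ≤ P_i^max and Σ_{j∈J_i} m_{ij} ≤ 1 for all i. Let (m, p) be feasible, fix a base station i, and let (m̃_i, p̃_i) be an optimal solution of base station i's subproblem: maximize Σ_{j∈J_i} B·m̃_{ij}·log₂(1 + p̃_{ij}·ḡ_{ij}) over m̃_i, p̃_i ≥ 0, subject to B·m̃_{ij}·log₂(1 + p̃_{ij}·ḡ_{ij})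 ≥ D_{ij} for all j ∈ J_i, the requirement that every other user's rate under the updated interference remains at least its current value r_{kl} for all k ≠ i, l ∈ J_k, Σ_{j∈J_i} m̃_{ij}·p̃_{ij} ≤ P_i^max, and Σ_{j∈J_i} m̃_{ij} ≤ 1, where ḡ_{ij} = g_{ij}/(Σ_{k≠i} Σ_{l∈J_k} m_{kl}·p_{kl}·g_{kj} + σ²). Then the updated point (with base station i's variables replaced by (m̃_i, p̃_i) and all rates recomputed) is again feasible for the full problem and its total sum rate is greater than or equal to Σ_i Σ_{j∈J_i} r_{ij}. Consequently, the sequence of sum-rate values generated by sequentially performing such per-base-station optimal updates is non-decreasing. -/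
open Finset

/-- Feasibility for the multi-cell sum rate maximization problem: nonnegative time
fractions and powers, rate demands met, per-cell average power limits and per-cell time
budgets respected. -/
noncomputable def sumRateFeasible (N : ℕ) (K : Fin N → ℕ) (B σ2 : ℝ)
    (g : Fin N → (i : Fin N) → Fin (K i) → ℝ)
    (D : (i : Fin N) → Fin (K i) → ℝ) (Pmax : Fin N → ℝ)
    (m p : (i : Fin N) → Fin (K i) → ℝ) : Prop :=
  (∀ i j, 0 ≤ m i j) ∧ (∀ i j, 0 ≤ p i j) ∧
  (∀ i j, D i j ≤ loadCoupledRate N K B σ2 g m p i j) ∧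
  (∀ i, ∑ j, m i j * p i j ≤ Pmax i) ∧
  (∀ i, ∑ j, m i j ≤ 1)

/-- Effective channel gain `ḡ_{ij}` of user `j` in cell `i`: the channel gain divided by
the total received inter-cell interference plus noise, under the current `(m, p)`. -/
noncomputable def effGain (N : ℕ) (K : Fin N → ℕ) (σ2 : ℝ)
    (g : Fin N → (i : Fin N) → Fin (K i) → ℝ)
    (m p : (i : Fin N) → Fin (K i) → ℝ) (i : Fin N) (j : Fin (K i)) : ℝ :=
  g i i j / ((∑ k ∈ Finset.univ.erase i, ∑ l, m k l * p k l * g k i j) + σ2)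

/-- Feasibility for base station `i`'s per-cell subproblem at the current point
`(m, p)`: the candidate `(m̃_i, p̃_i)` is nonnegative, meets cell `i`'s own rate demands
under the current interference, keeps every other user's rate (under the updated
interference) at least its current value, and respects cell `i`'s power and time
budgets. -/
noncomputable def subFeasible (N : ℕ) (K : Fin N → ℕ) (B σ2 : ℝ)
    (g : Fin N → (i : Fin N) → Fin (K i) → ℝ)
    (D : (i : Fin N) → Fin (K i) → ℝ) (Pmax : Fin N → ℝ)
    (m p : (i : Fin N) → Fin (K i) → ℝ) (i : Fin N)
    (mt pt : Fin (K i) → ℝ) : Prop :=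
  (∀ j, 0 ≤ mt j) ∧ (∀ j, 0 ≤ pt j) ∧
  (∀ j, D i j ≤ B * mt j * Real.logb 2 (1 + pt j * effGain N K σ2 g m p i j)) ∧
  (∀ k, k ≠ i → ∀ l : Fin (K k),
    loadCoupledRate N K B σ2 g m p k l ≤
      loadCoupledRate N K B σ2 g (Function.update m i mt) (Function.update p i pt) k l) ∧
  (∑ j, mt j * pt j ≤ Pmax i) ∧
  (∑ j, mt j ≤ 1)

lemma rate_update_eq (N : ℕ) (K : Fin N → ℕ) (B σ2 : ℝ)
    (g : Fin N → (i : Fin N) → Fin (K i) → ℝ)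
    (m p : (i : Fin N) → Fin (K i) → ℝ) (i : Fin N)
    (mt pt : Fin (K i) → ℝ) (j : Fin (K i)) :
    loadCoupledRate N K B σ2 g (Function.update m i mt) (Function.update p i pt) i j =
      B * mt j * Real.logb 2 (1 + pt j * effGain N K σ2 g m p i j) := by
  unfold loadCoupledRate effGain
  have hsum : (∑ k ∈ Finset.univ.erase i, ∑ l,
      (Function.update m i mt) k l * (Function.update p i pt) k l * g k i j)
      = ∑ k ∈ Finset.univ.erase i, ∑ l, m k l * p k l * g k i j := by
    refine Finset.sum_congr rfl fun k hk => ?_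
    have hki : k ≠ i := Finset.ne_of_mem_erase hk
    rw [Function.update_of_ne hki, Function.update_of_ne hki]
  rw [hsum, Function.update_self, Function.update_self, mul_div_assoc]

lemma rate_self_eq (N : ℕ) (K : Fin N → ℕ) (B σ2 : ℝ)
    (g : Fin N → (i : Fin N) → Fin (K i) → ℝ)
    (m p : (i : Fin N) → Fin (K i) → ℝ) (i : Fin N) (j : Fin (K i)) :
    loadCoupledRate N K B σ2 g m p i j =
      B * m i j * Real.logb 2 (1 + p i j * effGain N K σ2 g m p i j) := by
  unfold loadCoupledRate effGain
  rw [mul_div_assoc]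

/-- Monotone improvement step of the distributed sum rate maximization algorithm
(Theorem 6): if `(m, p)` is feasible and base station `i` replaces its variables by an
optimal solution `(m̃_i, p̃_i)` of its subproblem, then the updated point is again
feasible for the full problem and the total sum rate does not decrease. -/
theorem stmt_19 (N : ℕ) (hN : 1 ≤ N) (K : Fin N → ℕ) (hK : ∀ i, 1 ≤ K i)
    (B σ2 : ℝ) (hB : 0 < B) (hσ : 0 < σ2)
    (g : Fin N → (i : Fin N) → Fin (K i) → ℝ) (hg : ∀ k i j, 0 < g k i j)
    (D : (i : Fin N) → Fin (K i) → ℝ) (hD : ∀ i j, 0 < D i j)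
    (Pmax : Fin N → ℝ) (hPmax : ∀ i, 0 < Pmax i)
    (m p : (i : Fin N) → Fin (K i) → ℝ)
    (hfeas : sumRateFeasible N K B σ2 g D Pmax m p)
    (i : Fin N) (mt pt : Fin (K i) → ℝ)
    (hsub : subFeasible N K B σ2 g D Pmax m p i mt pt)
    (hsubopt : ∀ mt' pt' : Fin (K i) → ℝ,
      subFeasible N K B σ2 g D Pmax m p i mt' pt' →
      ∑ j, B * mt' j * Real.logb 2 (1 + pt' j * effGain N K σ2 g m p i j) ≤
        ∑ j, B * mt j * Real.logb 2 (1 + pt j * effGain N K σ2 g m p i j)) :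
    sumRateFeasible N K B σ2 g D Pmax
      (Function.update m i mt) (Function.update p i pt) ∧
    ∑ i', ∑ j, loadCoupledRate N K B σ2 g m p i' j ≤
      ∑ i', ∑ j, loadCoupledRate N K B σ2 g
        (Function.update m i mt) (Function.update p i pt) i' j := by

  obtain ⟨hm0, hp0, hDr, hP, hT⟩ := hfeas
  obtain ⟨hmt0, hpt0, hDt, hoth, hPt, hTt⟩ := hsub
  have hself : subFeasible N K B σ2 g D Pmax m p i (m i) (p i) := by
    refine ⟨fun j => hm0 i j, fun j => hp0 i j, fun j => ?_, fun k hk l => ?_, hP i, hT i⟩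
    · rw [← rate_self_eq]; exact hDr i j
    · rw [Function.update_eq_self, Function.update_eq_self]
  constructor
  · refine ⟨fun k j => ?_, fun k j => ?_, fun k j => ?_, fun k => ?_, fun k => ?_⟩
    · by_cases h : k = i
      · subst h; rw [Function.update_self]; exact hmt0 j
      · rw [Function.update_of_ne h]; exact hm0 k j
    · by_cases h : k = i
      · subst h; rw [Function.update_self]; exact hpt0 j
      · rw [Function.update_of_ne h]; exact hp0 k j
    · by_cases h : k = i
      · subst h; rw [rate_update_eq]; exact hDt j
      · calc D k j ≤ loadCoupledRate N K B σ2 g m p k j := hDr k j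
          _ ≤ _ := hoth k h j
    · by_cases h : k = i
      · subst h; simpa using hPt
      · rw [Function.update_of_ne h, Function.update_of_ne h]; exact hP k
    · by_cases h : k = i
      · subst h; simpa using hTt
      · rw [Function.update_of_ne h]; exact hT k
  · refine Finset.sum_le_sum fun k _ => ?_
    by_cases h : k = i
    · subst h
      calc ∑ j, loadCoupledRate N K B σ2 g m p k j
          = ∑ j, B * m k j * Real.logb 2 (1 + p k j * effGain N K σ2 g m p k j) := by
            exact Finset.sum_congr rfl fun j _ => rate_self_eq N K B σ2 g m p k j
        _ ≤ ∑ j, B * mt j * Real.logb 2 (1 + pt j * effGain N K σ2 g m p k j) :=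
            hsubopt (m k) (p k) hself
        _ = ∑ j, loadCoupledRate N K B σ2 g (Function.update m k mt)
              (Function.update p k pt) k j := by
            exact Finset.sum_congr rfl fun j _ => (rate_update_eq N K B σ2 g m p k mt pt j).symm
    · exact Finset.sum_le_sum fun j _ => hoth k h j
end
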